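/- Let α ∈ ℝ and c ∈ ℝ with c ≠ 0. Define q_w(x,t) = c·(−64c²α²t² − 16c⁴t² − 32c²αxt + 16ic²t − 4c²x² + 3)·exp(−2i(2α²t − c²t + αx)) / (64α²c²t² + 16c⁴t² + 32αc²tx + 4c²x² + 1). Then the denominator equals 1 + 16c⁴t² + 4c²(x + 4αt)² and is strictly positive on ℝ², and q_w satisfies the focusing NLS equation i·∂t q_w + ∂x² q_w + 2 (q_w)² conj(q_w) = 0 at every (x,t) ∈ ℝ². -/

import Mathlib

open Complex

/-- Partial derivative in `x` of a function of `(x,t)`. -/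
noncomputable def pX (f : ℝ → ℝ → ℂ) : ℝ → ℝ → ℂ := fun x t => deriv (fun x' => f x' t) x

/-- Partial derivative in `t` of a function of `(x,t)`. -/
noncomputable def pT (f : ℝ → ℝ → ℂ) : ℝ → ℝ → ℂ := fun x t => deriv (fun t' => f x t') t

/-- The rogue wave
`q_w(x,t) = c(−64c²α²t² − 16c⁴t² − 32c²αxt + 16ic²t − 4c²x² + 3) e^{−2i(2α²t − c²t + αx)}
  / (64α²c²t² + 16c⁴t² + 32αc²tx + 4c²x² + 1)`. -/
noncomputable def rogueWave (α c : ℝ) : ℝ → ℝ → ℂ := fun x t =>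
  (c : ℂ) * (-64 * (c : ℂ) ^ 2 * (α : ℂ) ^ 2 * (t : ℂ) ^ 2 - 16 * (c : ℂ) ^ 4 * (t : ℂ) ^ 2
      - 32 * (c : ℂ) ^ 2 * (α : ℂ) * (x : ℂ) * (t : ℂ) + 16 * I * (c : ℂ) ^ 2 * (t : ℂ)
      - 4 * (c : ℂ) ^ 2 * (x : ℂ) ^ 2 + 3)
    * Complex.exp (-2 * I * ((2 * α ^ 2 * t - c ^ 2 * t + α * x : ℝ) : ℂ))
    / ((64 * α ^ 2 * c ^ 2 * t ^ 2 + 16 * c ^ 4 * t ^ 2 + 32 * α * c ^ 2 * t * x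
        + 4 * c ^ 2 * x ^ 2 + 1 : ℝ) : ℂ)


/-!
After the Galilean shift `ξ = x + 4αt`, the rogue wave is `q = N e^{φ} / D` with
`D = 1 + 16c⁴t² + 4c²ξ² > 0`, `N = c (4 (1 + 4ic²t) - D)` and `φ` linear in `x` and `t`.
The quotient rule gives `∂ₜq`, `∂ₓq`, `∂ₓ²q` as polynomials times `e^{φ}` over powers of `D`;
since `conj q = conj N e^{-φ} / D`, multiplying the NLS expression by `D⁴ e^{-φ}` leaves a
polynomial identity in `α, c, ξ, t, i`, which `ring` verifies modulo `i² = -1`.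
-/

theorem HasDerivAt.mul_cexp_div {𝕜 : Type*} [NontriviallyNormedField 𝕜] [NormedAlgebra 𝕜 ℂ]
    {n d φ : 𝕜 → ℂ} {n' d' φ' : ℂ} {x : 𝕜} (hn : HasDerivAt n n' x) (hd : HasDerivAt d d' x)
    (hφ : HasDerivAt φ φ' x) (hdx : d x ≠ 0) :
    HasDerivAt (fun y => n y * cexp (φ y) / d y)
      (((n' + φ' * n x) * d x - n x * d') * cexp (φ x) / d x ^ 2) x :=
  ((hn.mul hφ.cexp).div hd hdx).congr_deriv (by simp only [Pi.mul_apply]; ring)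

theorem rogueWave_den_eq (α c x t : ℝ) :
    64 * α ^ 2 * c ^ 2 * t ^ 2 + 16 * c ^ 4 * t ^ 2 + 32 * α * c ^ 2 * t * x + 4 * c ^ 2 * x ^ 2 + 1
      = 1 + 16 * c ^ 4 * t ^ 2 + 4 * c ^ 2 * (x + 4 * α * t) ^ 2 := by
  ring

theorem rogueWave_den_pos (α c x t : ℝ) :
    0 < 64 * α ^ 2 * c ^ 2 * t ^ 2 + 16 * c ^ 4 * t ^ 2 + 32 * α * c ^ 2 * t * x
      + 4 * c ^ 2 * x ^ 2 + 1 := by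
  rw [rogueWave_den_eq]
  positivity

/- The polynomials are taken in complex variables `z w` so that their partial derivatives are
complex derivatives, which `HasDerivAt.comp_ofReal` restricts to the real line. -/
namespace RogueWave

section Polynomials

variable (α c : ℂ)

def den (z w : ℂ) : ℂ := 1 + 16 * c ^ 4 * w ^ 2 + 4 * c ^ 2 * (z + 4 * α * w) ^ 2

def denX (z w : ℂ) : ℂ := 8 * c ^ 2 * (z + 4 * α * w)

def denT (z w : ℂ) : ℂ := 32 * c ^ 4 * w + 32 * α * c ^ 2 * (z + 4 * α * w)

def num (z w : ℂ) : ℂ := c * (4 * (1 + 4 * I * c ^ 2 * w) - den α c z w)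

def phase (z w : ℂ) : ℂ := -2 * I * (2 * α ^ 2 * w - c ^ 2 * w + α * z)

def pXNum (z w : ℂ) : ℂ :=
  (-c * denX α c z w + -2 * I * α * num α c z w) * den α c z w - num α c z w * denX α c z w

def pXNumX (z w : ℂ) : ℂ :=
  (-c * (8 * c ^ 2) + -2 * I * α * (-c * denX α c z w)) * den α c z w
    + -2 * I * α * num α c z w * denX α c z w - num α c z w * (8 * c ^ 2)

def pXXNum (z w : ℂ) : ℂ :=
  (pXNumX α c z w + -2 * I * α * pXNum α c z w) * den α c z w ^ 2
    - pXNum α c z w * (2 * den α c z w * denX α c z w)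

def pTNum (z w : ℂ) : ℂ :=
  (c * (16 * I * c ^ 2 - denT α c z w) + -2 * I * (2 * α ^ 2 - c ^ 2) * num α c z w)
    * den α c z w - num α c z w * denT α c z w

section Derivatives

variable (z w : ℂ)

theorem hasDerivAt_den_x : HasDerivAt (fun y => den α c y w) (denX α c z w) z :=
  ((((hasDerivAt_id' z).add_const (4 * α * w)).pow 2).const_mul (4 * c ^ 2)
    |>.const_add (1 + 16 * c ^ 4 * w ^ 2)).congr_deriv (by simp only [denX]; ring)

theorem hasDerivAt_den_t : HasDerivAt (fun s => den α c z s) (denT α c z w) w :=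
  (((((hasDerivAt_id' w).pow 2).const_mul (16 * c ^ 4)).const_add 1).add
    ((((hasDerivAt_id' w).const_mul (4 * α)).const_add z).pow 2 |>.const_mul (4 * c ^ 2)))
    |>.congr_deriv (by simp only [denT]; ring)

theorem hasDerivAt_denX_x : HasDerivAt (fun y => denX α c y w) (8 * c ^ 2) z :=
  (((hasDerivAt_id' z).add_const (4 * α * w)).const_mul (8 * c ^ 2)).congr_deriv (mul_one _)

theorem hasDerivAt_num_x : HasDerivAt (fun y => num α c y w) (-c * denX α c z w) z :=
  (((hasDerivAt_den_x α c z w).const_sub (4 * (1 + 4 * I * c ^ 2 * w))).const_mul c).congr_deriv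
    (by ring)

theorem hasDerivAt_num_t :
    HasDerivAt (fun s => num α c z s) (c * (16 * I * c ^ 2 - denT α c z w)) w :=
  (((((hasDerivAt_id' w).const_mul (4 * I * c ^ 2)).const_add 1).const_mul 4).sub
    (hasDerivAt_den_t α c z w) |>.const_mul c).congr_deriv (by ring)

theorem hasDerivAt_phase_x : HasDerivAt (fun y => phase α c y w) (-2 * I * α) z :=
  ((((hasDerivAt_id' z).const_mul α).const_add (2 * α ^ 2 * w - c ^ 2 * w)).const_mul
    (-2 * I)).congr_deriv (by ring)

theorem hasDerivAt_phase_t :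
    HasDerivAt (fun s => phase α c z s) (-2 * I * (2 * α ^ 2 - c ^ 2)) w :=
  ((((hasDerivAt_id' w).const_mul (2 * α ^ 2)).sub ((hasDerivAt_id' w).const_mul (c ^ 2))
    |>.add_const (α * z)).const_mul (-2 * I)).congr_deriv (by ring)

theorem hasDerivAt_pXNum_x : HasDerivAt (fun y => pXNum α c y w) (pXNumX α c z w) z :=
  (((((hasDerivAt_denX_x α c z w).const_mul (-c)).add ((hasDerivAt_num_x α c z w).const_mul
    (-2 * I * α))).mul (hasDerivAt_den_x α c z w)).sub
    ((hasDerivAt_num_x α c z w).mul (hasDerivAt_denX_x α c z w))).congr_deriv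
    (by simp only [pXNumX, Pi.add_apply]; ring)

end Derivatives

theorem nls_numerator_eq_zero (z w : ℂ) :
    I * pTNum α c z w * den α c z w ^ 2 + pXXNum α c z w
      + 2 * num α c z w ^ 2 * (c * (4 * (1 - 4 * I * c ^ 2 * w) - den α c z w)) * den α c z w
      = 0 := by
  simp only [pTNum, pXXNum, pXNumX, pXNum, num, den, denX, denT]
  -- everything depends on `z` only through the moving coordinate `z + 4αw`
  generalize z + 4 * α * w = ξ
  ring_nf
  simp only [I_sq, I_pow_three]
  ring

end Polynomials

theorem den_ofReal (α c x t : ℝ) :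
    den α c x t = ((1 + 16 * c ^ 4 * t ^ 2 + 4 * c ^ 2 * (x + 4 * α * t) ^ 2 : ℝ) : ℂ) := by
  simp only [den]
  push_cast
  rfl

theorem den_ofReal_ne_zero (α c x t : ℝ) : den α c x t ≠ 0 := by
  rw [den_ofReal, ← rogueWave_den_eq]
  exact_mod_cast (rogueWave_den_pos α c x t).ne'

end RogueWave

open RogueWave

theorem rogueWave_eq (α c x t : ℝ) :
    rogueWave α c x t = num α c x t * cexp (phase α c x t) / den α c x t := by
  rw [den_ofReal, ← rogueWave_den_eq]
  simp only [rogueWave, num, den, phase]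
  push_cast
  ring_nf

theorem conj_rogueWave (α c x t : ℝ) :
    starRingEnd ℂ (rogueWave α c x t)
      = c * (4 * (1 - 4 * I * c ^ 2 * t) - den α c x t) * cexp (-phase α c x t) / den α c x t := by
  rw [rogueWave_eq, map_div₀, map_mul, ← exp_conj, den_ofReal, conj_ofReal, ← den_ofReal]
  simp only [num, phase, den, map_mul, map_add, map_sub, map_neg, map_pow, map_ofNat, map_one,
    conj_ofReal, conj_I]
  ring_nf

theorem pX_rogueWave (α c x t : ℝ) :
    pX (rogueWave α c) x t = pXNum α c x t * cexp (phase α c x t) / den α c x t ^ 2 := by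
  have h := (hasDerivAt_num_x α c x t).mul_cexp_div (hasDerivAt_den_x α c x t)
    (hasDerivAt_phase_x α c x t) (den_ofReal_ne_zero α c x t)
  simp only [pX, rogueWave_eq]
  exact h.comp_ofReal.deriv

theorem pT_rogueWave (α c x t : ℝ) :
    pT (rogueWave α c) x t = pTNum α c x t * cexp (phase α c x t) / den α c x t ^ 2 := by
  have h := (hasDerivAt_num_t α c x t).mul_cexp_div (hasDerivAt_den_t α c x t)
    (hasDerivAt_phase_t α c x t) (den_ofReal_ne_zero α c x t)
  simp only [pT, rogueWave_eq]
  exact h.comp_ofReal.deriv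

theorem pX_pX_rogueWave (α c x t : ℝ) :
    pX (pX (rogueWave α c)) x t = pXXNum α c x t * cexp (phase α c x t) / den α c x t ^ 4 := by
  have h := (hasDerivAt_pXNum_x α c x t).mul_cexp_div ((hasDerivAt_den_x α c x t).fun_pow 2)
    (hasDerivAt_phase_x α c x t) (pow_ne_zero 2 (den_ofReal_ne_zero α c x t))
  change deriv (fun y => pX (rogueWave α c) y t) x = _
  simp only [pX_rogueWave]
  rw [h.comp_ofReal.deriv, pXXNum]
  ring

theorem statement14_general (α c : ℝ) :
    (∀ x t : ℝ,
      (64 * α ^ 2 * c ^ 2 * t ^ 2 + 16 * c ^ 4 * t ^ 2 + 32 * α * c ^ 2 * t * x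
          + 4 * c ^ 2 * x ^ 2 + 1 : ℝ)
        = 1 + 16 * c ^ 4 * t ^ 2 + 4 * c ^ 2 * (x + 4 * α * t) ^ 2
      ∧ 0 < (64 * α ^ 2 * c ^ 2 * t ^ 2 + 16 * c ^ 4 * t ^ 2 + 32 * α * c ^ 2 * t * x
          + 4 * c ^ 2 * x ^ 2 + 1 : ℝ))
    ∧ (∀ x t : ℝ,
      I * pT (rogueWave α c) x t + pX (pX (rogueWave α c)) x t
        + 2 * (rogueWave α c x t) ^ 2 * (starRingEnd ℂ) (rogueWave α c x t) = 0) := by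
  refine ⟨fun x t => ⟨rogueWave_den_eq α c x t, rogueWave_den_pos α c x t⟩, fun x t => ?_⟩
  rw [pT_rogueWave, pX_pX_rogueWave, conj_rogueWave, rogueWave_eq, exp_neg]
  have hden := den_ofReal_ne_zero α c x t
  have hexp := exp_ne_zero (phase α c x t)
  field_simp
  linear_combination cexp (phase α c x t) * nls_numerator_eq_zero α c x t

/-- the denominator of the rogue wave equals `1 + 16c⁴t² + 4c²(x + 4αt)²`,
hence is strictly positive, and `q_w` satisfies the focusing NLS equation. -/
theorem statement14 (α c : ℝ) (hc : c ≠ 0) :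
    (∀ x t : ℝ,
      (64 * α ^ 2 * c ^ 2 * t ^ 2 + 16 * c ^ 4 * t ^ 2 + 32 * α * c ^ 2 * t * x
          + 4 * c ^ 2 * x ^ 2 + 1 : ℝ)
        = 1 + 16 * c ^ 4 * t ^ 2 + 4 * c ^ 2 * (x + 4 * α * t) ^ 2
      ∧ 0 < (64 * α ^ 2 * c ^ 2 * t ^ 2 + 16 * c ^ 4 * t ^ 2 + 32 * α * c ^ 2 * t * x
          + 4 * c ^ 2 * x ^ 2 + 1 : ℝ))
    ∧ (∀ x t : ℝ,
      I * pT (rogueWave α c) x t + pX (pX (rogueWave α c)) x t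
        + 2 * (rogueWave α c x t) ^ 2 * (starRingEnd ℂ) (rogueWave α c x t) = 0) :=
  statement14_general α c
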